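/- arXiv:1207.0562 — 4 statements merged into one kernel-verified Lean document; each statement's English description precedes it below -/
import Mathlib

section
/- Let Λ be a commutative ring, I = ⟨ν₁,…,ν_s⟩ an ideal, R = Λ/I, φ : T = Λ[x₁,…,x_n] → A = R[x₁,…,x_n] the coefficientwise reduction map. Let G = {g₁,…,g_m} be a Gröbner basis of an ideal J of T containing ν₁,…,ν_s (as constant polynomials), and suppose every g ∈ G \ {ν₁,…,ν_s} has leading coefficient not in I. Then the set Ḡ = φ(G) \ {0} is a Gröbner basis of the ideal φ(J) ⊆ A: for every nonzero f̄ ∈ φ(J) there exist nonzero coefficients μ̄_j ∈ R, monomials x^{β(j)}, and elements ḡ_{i_j} ∈ Ḡ with LM(f̄) = x^{β(j)} LM(ḡ_{i_j}) for all j and LT(f̄) = Σ_j μ̄_j x^{β(j)} LT(ḡ_{i_j}). -/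
/-- The leading exponent (leading monomial) of `f` w.r.t. the monomial order `m`. -/
noncomputable def mdeg {σ R : Type*} [CommSemiring R] (m : MonomialOrder σ)
    (f : MvPolynomial σ R) : σ →₀ ℕ :=
  m.toSyn.symm (f.support.sup fun d => m.toSyn d)

/-- The leading coefficient of `f` w.r.t. the monomial order `m`. -/
noncomputable def mlc {σ R : Type*} [CommSemiring R] (m : MonomialOrder σ)
    (f : MvPolynomial σ R) : R :=
  MvPolynomial.coeff (mdeg m f) f

/-- The leading term of `f` w.r.t. the monomial order `m`. -/
noncomputable def mlt {σ R : Type*} [CommSemiring R] (m : MonomialOrder σ)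
    (f : MvPolynomial σ R) : MvPolynomial σ R :=
  MvPolynomial.monomial (mdeg m f) (mlc m f)

section Aux

variable {σ R : Type*} [CommSemiring R] (m : MonomialOrder σ)

lemma aux_le_mdeg {f : MvPolynomial σ R} {d : σ →₀ ℕ} (hd : d ∈ f.support) :
    m.toSyn d ≤ m.toSyn (mdeg m f) := by
  unfold mdeg
  rw [AddEquiv.apply_symm_apply]
  exact Finset.le_sup hd

lemma aux_mdeg_mem_support {f : MvPolynomial σ R} (hf : f ≠ 0) : mdeg m f ∈ f.support := by
  obtain ⟨d, hd, he⟩ := Finset.exists_mem_eq_sup f.support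
      (MvPolynomial.support_nonempty.mpr hf) (fun d => m.toSyn d)
  unfold mdeg
  rw [he]
  simpa using hd

lemma aux_mdeg_map {S : Type*} [CommSemiring S] (ψ : R →+* S) {f : MvPolynomial σ R}
    (h : ψ (mlc m f) ≠ 0) :
    mdeg m (MvPolynomial.map ψ f) = mdeg m f ∧
      mlc m (MvPolynomial.map ψ f) = ψ (mlc m f) := by
  have hmem : mdeg m f ∈ (MvPolynomial.map ψ f).support := by
    rw [MvPolynomial.mem_support_iff, MvPolynomial.coeff_map]
    exact h
  have hle : m.toSyn (mdeg m (MvPolynomial.map ψ f)) ≤ m.toSyn (mdeg m f) := by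
    unfold mdeg
    rw [AddEquiv.apply_symm_apply, AddEquiv.apply_symm_apply]
    exact Finset.sup_mono (MvPolynomial.support_map_subset _ _)
  have hd : mdeg m (MvPolynomial.map ψ f) = mdeg m f :=
    m.toSyn.injective (le_antisymm hle (aux_le_mdeg m hmem))
  refine ⟨hd, ?_⟩
  rw [mlc, hd, MvPolynomial.coeff_map, mlc]

end Aux

/-- if `G` is a Gröbner basis of `J ⊆ Λ[x]` containing the constants
`ν₁,…,ν_s` generating `I`, and every `g ∈ G` other than the `ν_j` has leading
coefficient outside `I`, then `φ(G) \ {0}` is a Gröbner basis of `φ(J) ⊆ (Λ/I)[x]`. -/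
theorem stmt7 {Λ : Type*} [CommRing Λ] {n s t : ℕ}
    (m : MonomialOrder (Fin n)) (ν : Fin s → Λ) (I : Ideal Λ)
    (hI : I = Ideal.span (Set.range ν))
    (J : Ideal (MvPolynomial (Fin n) Λ))
    (hνJ : ∀ j, MvPolynomial.C (ν j) ∈ J)
    (G : Fin t → MvPolynomial (Fin n) Λ)
    (hGJ : ∀ i, G i ∈ J) (hG0 : ∀ i, G i ≠ 0)
    (hGB : Ideal.span (mlt m '' {f | f ∈ J ∧ f ≠ 0}) =
      Ideal.span (mlt m '' Set.range G))
    (hlc : ∀ i, (∀ j, G i ≠ MvPolynomial.C (ν j)) → mlc m (G i) ∉ I) :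
    ∀ fbar ∈ Ideal.map (MvPolynomial.map (Ideal.Quotient.mk I)) J, fbar ≠ 0 →
      ∃ (k : ℕ) (c : Fin k → Λ ⧸ I) (β : Fin k → (Fin n →₀ ℕ))
        (g : Fin k → MvPolynomial (Fin n) (Λ ⧸ I)),
        (∀ j, c j ≠ 0) ∧
        (∀ j, g j ∈ (MvPolynomial.map (Ideal.Quotient.mk I) '' Set.range G) \ {0}) ∧
        (∀ j, mdeg m fbar = β j + mdeg m (g j)) ∧
        mlt m fbar = ∑ j, MvPolynomial.monomial (β j) (c j) * mlt m (g j) := by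
  classical
  intro fbar hfbar hfbar0
  set φ : MvPolynomial (Fin n) Λ →+* MvPolynomial (Fin n) (Λ ⧸ I) :=
    MvPolynomial.map (Ideal.Quotient.mk I) with hφ
  -- constants from I are in J
  have hIJ : ∀ a ∈ I, MvPolynomial.C a ∈ J := by
    intro a ha
    have hle : I ≤ J.comap (MvPolynomial.C : Λ →+* MvPolynomial (Fin n) Λ) := by
      rw [hI, Ideal.span_le]
      rintro x ⟨j, rfl⟩
      exact hνJ j
    exact hle ha
  -- kernel of φ is contained in J
  have hker : ∀ p : MvPolynomial (Fin n) Λ, φ p = 0 → p ∈ J := by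
    intro p hp
    have hcoeff : ∀ d, MvPolynomial.coeff d p ∈ I := by
      intro d
      have h := congrArg (MvPolynomial.coeff d) hp
      rw [hφ, MvPolynomial.coeff_map] at h
      simpa [Ideal.Quotient.eq_zero_iff_mem] using h
    rw [p.as_sum]
    apply Ideal.sum_mem
    intro d _
    rw [← mul_one (MvPolynomial.coeff d p), ← MvPolynomial.C_mul_monomial]
    exact Ideal.mul_mem_right _ _ (hIJ _ (hcoeff d))
  -- a lift of fbar with the same support
  set ρ : Λ ⧸ I → Λ := Function.surjInv Ideal.Quotient.mk_surjective with hρ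
  have hρ' : ∀ x, Ideal.Quotient.mk I (ρ x) = x :=
    fun x => Function.surjInv_eq Ideal.Quotient.mk_surjective x
  set f : MvPolynomial (Fin n) Λ :=
    ∑ d ∈ fbar.support, MvPolynomial.monomial d (ρ (MvPolynomial.coeff d fbar)) with hfdef
  have hcoef : ∀ d, MvPolynomial.coeff d f =
      if d ∈ fbar.support then ρ (MvPolynomial.coeff d fbar) else 0 := by
    intro d
    rw [hfdef, MvPolynomial.coeff_sum]
    simp only [MvPolynomial.coeff_monomial]
    exact Finset.sum_ite_eq' _ _ _
  have hφf : φ f = fbar := by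
    ext d
    rw [hφ, MvPolynomial.coeff_map, hcoef d]
    split_ifs with h
    · exact hρ' _
    · rw [map_zero]
      exact (MvPolynomial.notMem_support_iff.mp h).symm
  have hsupp : f.support = fbar.support := by
    ext d
    rw [MvPolynomial.mem_support_iff, hcoef d]
    constructor
    · intro hne
      by_contra h
      simp [h] at hne
    · intro h
      rw [if_pos h]
      intro h0
      apply MvPolynomial.mem_support_iff.mp h
      rw [← hρ' (MvPolynomial.coeff d fbar), h0, map_zero]
  have hdeg : mdeg m f = mdeg m fbar := by unfold mdeg; rw [hsupp]
  have hf0 : f ≠ 0 := fun h => hfbar0 (by rw [← hφf, h, map_zero])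
  have hmlc : Ideal.Quotient.mk I (mlc m f) = mlc m fbar := by
    have h : mlc m fbar = MvPolynomial.coeff (mdeg m f) (φ f) := by
      rw [hφf, hdeg, mlc]
    rw [h, hφ, MvPolynomial.coeff_map, mlc]
  -- f belongs to J
  have hfJ : f ∈ J := by
    obtain ⟨f0, hf0J, hf0φ⟩ := (Ideal.mem_map_iff_of_surjective φ
      (MvPolynomial.map_surjective _ Ideal.Quotient.mk_surjective)).mp hfbar
    have hdiff : f - f0 ∈ J := hker _ (by rw [map_sub, hφf, hf0φ, sub_self])
    have := J.add_mem hdiff hf0J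
    simpa using this
  -- Gröbner basis property in Λ[x]
  have hmem : mlt m f ∈ Ideal.span (Set.range (fun i => mlt m (G i))) := by
    have h1 : mlt m f ∈ Ideal.span (mlt m '' Set.range G) := by
      rw [← hGB]
      exact Ideal.subset_span ⟨f, ⟨hfJ, hf0⟩, rfl⟩
    rwa [show (mlt m '' Set.range G) = Set.range (fun i => mlt m (G i)) from
      (Set.range_comp (mlt m) G).symm] at h1
  obtain ⟨p, hp⟩ := (Submodule.mem_span_range_iff_exists_fun _).mp hmem
  set δ := mdeg m fbar with hδ
  -- extract coefficient at δ, pushed into the quotient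
  set q : Fin t → Λ ⧸ I := fun i => if mdeg m (G i) ≤ δ then
      Ideal.Quotient.mk I (MvPolynomial.coeff (δ - mdeg m (G i)) (p i)) *
        Ideal.Quotient.mk I (mlc m (G i)) else 0 with hq
  have key : mlc m fbar = ∑ i : Fin t, q i := by
    have h1 : mlc m f = ∑ i : Fin t, (if mdeg m (G i) ≤ δ then
        MvPolynomial.coeff (δ - mdeg m (G i)) (p i) * mlc m (G i) else 0) := by
      have h2 := congrArg (MvPolynomial.coeff δ) hp
      rw [MvPolynomial.coeff_sum] at h2
      have h3 : MvPolynomial.coeff δ (mlt m f) = mlc m f := by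
        rw [mlt, MvPolynomial.coeff_monomial, if_pos hdeg]
      rw [h3] at h2
      rw [← h2]
      apply Finset.sum_congr rfl
      intro i _
      rw [smul_eq_mul, mlt, MvPolynomial.coeff_mul_monomial']
    have h4 := congrArg (Ideal.Quotient.mk I) h1
    rw [hmlc, map_sum] at h4
    rw [h4]
    apply Finset.sum_congr rfl
    intro i _
    simp only [hq]
    split_ifs with h
    · rw [map_mul]
    · rw [map_zero]
  set F : Finset (Fin t) := Finset.univ.filter (fun i => q i ≠ 0) with hF
  have hFfacts : ∀ i ∈ F, mdeg m (G i) ≤ δ ∧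
      Ideal.Quotient.mk I (MvPolynomial.coeff (δ - mdeg m (G i)) (p i)) ≠ 0 ∧
      Ideal.Quotient.mk I (mlc m (G i)) ≠ 0 := by
    intro i hi
    have hqi : q i ≠ 0 := (Finset.mem_filter.mp hi).2
    by_cases h : mdeg m (G i) ≤ δ
    · refine ⟨h, ?_, ?_⟩ <;>
      · intro h0
        apply hqi
        simp [hq, h, h0]
    · exact absurd (by simp [hq, h]) hqi
  set e := F.equivFin with he
  refine ⟨F.card,
    fun j => Ideal.Quotient.mk I
      (MvPolynomial.coeff (δ - mdeg m (G (e.symm j))) (p (e.symm j))),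
    fun j => δ - mdeg m (G (e.symm j)),
    fun j => φ (G (e.symm j)), ?_, ?_, ?_, ?_⟩
  · intro j
    exact (hFfacts _ (e.symm j).2).2.1
  · intro j
    obtain ⟨_, _, h3⟩ := hFfacts _ (e.symm j).2
    have hmap := aux_mdeg_map m (Ideal.Quotient.mk I) h3
    refine ⟨⟨G (e.symm j), ⟨_, rfl⟩, rfl⟩, ?_⟩
    simp only [Set.mem_singleton_iff]
    intro h0
    apply h3
    rw [← hmap.2, h0]
    simp [mlc]
  · intro j
    obtain ⟨h1, _, h3⟩ := hFfacts _ (e.symm j).2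
    have hmap := aux_mdeg_map m (Ideal.Quotient.mk I) h3
    rw [show mdeg m (φ (G (e.symm j))) = mdeg m (G (e.symm j)) from hmap.1,
      tsub_add_cancel_of_le h1]
  · have hterm : ∀ j : Fin F.card,
        (MvPolynomial.monomial (δ - mdeg m (G (e.symm j))))
          (Ideal.Quotient.mk I
            (MvPolynomial.coeff (δ - mdeg m (G (e.symm j))) (p (e.symm j)))) *
          mlt m (φ (G (e.symm j))) =
        MvPolynomial.monomial δ (q (e.symm j)) := by
      intro j
      obtain ⟨h1, _, h3⟩ := hFfacts _ (e.symm j).2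
      have hmap := aux_mdeg_map m (Ideal.Quotient.mk I) h3
      rw [mlt, hmap.1, hmap.2, MvPolynomial.monomial_mul, tsub_add_cancel_of_le h1]
      simp only [hq, if_pos h1]
    rw [show mlt m fbar = MvPolynomial.monomial δ (mlc m fbar) from rfl]
    calc MvPolynomial.monomial δ (mlc m fbar)
        = MvPolynomial.monomial δ (∑ i : Fin t, q i) := by rw [key]
      _ = MvPolynomial.monomial δ (∑ i ∈ F, q i) := by
          rw [hF, Finset.sum_filter_ne_zero]
      _ = MvPolynomial.monomial δ (∑ x : F, q x) := by rw [Finset.sum_coe_sort]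
      _ = MvPolynomial.monomial δ (∑ j : Fin F.card, q (e.symm j)) := by
          rw [Equiv.sum_comp e.symm (fun x : F => q x)]
      _ = ∑ j : Fin F.card, MvPolynomial.monomial δ (q (e.symm j)) := by
          rw [map_sum]
      _ = _ := by
          apply Finset.sum_congr rfl
          intro j _
          rw [hterm j]
end

section
/- Let D be a PID with fraction field K, L a field extension of K, and ϑ ∈ L algebraic over K with minimal polynomial q(y) ∈ K[y]. Then there exist b, d ∈ D and a primitive irreducible polynomial p(y) ∈ D[y] such that b·q(y) = d·p(y), and D[ϑ] ≅ D[y]/⟨p(y)⟩ as D-algebras. -/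
/-!
Clear the denominators of the minimal polynomial `q` of `ϑ` and divide by the content: this gives
a primitive `p ∈ D[y]` whose image in `K[y]` is associated to `q`, so `p` is irreducible by Gauss's
lemma. The kernel of `D[y] → L, y ↦ ϑ` consists of the `f` with `q ∣ f` in `K[y]`, i.e. with
`p ∣ f` in `K[y]`, and since `p` is primitive this already means `p ∣ f` in `D[y]`. Thus the kernel
is `⟨p⟩`, and its image is `D[ϑ]`.
-/

open Polynomial

namespace Polynomial

section FractionRing

variable {R K : Type*} [CommRing R] [IsDomain R] [IsGCDMonoid R]
  [Field K] [Algebra R K] [IsFractionRing R K]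

theorem exists_isPrimitive_smul_eq_smul_map {q : K[X]} (hq : q ≠ 0) :
    ∃ (b d : R) (p : R[X]), b ≠ 0 ∧ d ≠ 0 ∧ p.IsPrimitive ∧
      algebraMap R K b • q = algebraMap R K d • p.map (algebraMap R K) := by
  let := Classical.arbitrary (NormalizedGCDMonoid R)
  set P := IsLocalization.integerNormalization (nonZeroDivisors R) q
  obtain ⟨b, hb0, hb⟩ := IsLocalization.integerNormalization_spec (nonZeroDivisors R) q
  have hP : P ≠ 0 := IsFractionRing.integerNormalization_eq_zero_iff.not.mpr hq
  refine ⟨b, P.content, P.primPart, nonZeroDivisors.ne_zero hb0,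
    content_eq_zero_iff.not.mpr hP, P.isPrimitive_primPart, ?_⟩
  have hbP : algebraMap R K b • q = P.map (algebraMap R K) := by rw [hb, algebraMap_smul]
  rw [hbP, smul_eq_C_mul, ← map_C, ← Polynomial.map_mul, ← P.eq_C_content_mul_primPart]

theorem IsPrimitive.ker_aeval_eq_span {L : Type*} [Ring L] [Algebra K L] [Algebra R L]
    [IsScalarTower R K L] {x : L} {p : R[X]} (hp : p.IsPrimitive)
    (hpx : Associated (minpoly K x) (p.map (algebraMap R K))) :
    RingHom.ker (aeval (R := R) x) = Ideal.span {p} := by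
  ext f
  rw [RingHom.mem_ker, Ideal.mem_span_singleton, hp.dvd_iff_fraction_map_dvd_fraction_map K,
    ← hpx.dvd_iff_dvd_left, minpoly.dvd_iff, aeval_map_algebraMap]

end FractionRing

theorem associated_of_smul_eq_smul {K : Type*} [Field K] {a b : K} {f g : K[X]}
    (ha : a ≠ 0) (hb : b ≠ 0) (h : a • f = b • g) : Associated f g := by
  rw [smul_eq_C_mul, smul_eq_C_mul] at h
  exact (associated_unit_mul_left f _ (isUnit_C.mpr ha.isUnit)).symm.trans
    (h ▸ associated_unit_mul_left g _ (isUnit_C.mpr hb.isUnit))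

noncomputable def quotientSpanEquivAdjoin {R A : Type*} [CommRing R] [CommRing A] [Algebra R A]
    {x : A} {p : R[X]} (h : RingHom.ker (aeval (R := R) x) = Ideal.span {p}) :
    (R[X] ⧸ Ideal.span {p}) ≃ₐ[R] Algebra.adjoin R {x} :=
  (Ideal.quotientEquivAlgOfEq R h.symm).trans
    ((Ideal.quotientKerEquivRange (aeval (R := R) x)).trans
      (Subalgebra.equivOfEq _ _ (Algebra.adjoin_singleton_eq_range_aeval R x).symm))

end Polynomial

/-- for `D` a PID with fraction field `K`, `ϑ ∈ L` algebraic over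
`K` with minimal polynomial `q`, there are `b, d ∈ D` and a primitive irreducible
`p ∈ D[y]` with `b·q = d·p`, and `D[ϑ] ≅ D[y]/⟨p⟩` as `D`-algebras. -/
theorem stmt15 {D : Type*} [CommRing D] [IsDomain D] [IsPrincipalIdealRing D]
    (K L : Type*) [Field K] [Algebra D K] [IsFractionRing D K]
    [Field L] [Algebra K L] [Algebra D L] [IsScalarTower D K L]
    (ϑ : L) (halg : IsAlgebraic K ϑ) :
    ∃ (b d : D) (p : Polynomial D),
      p.IsPrimitive ∧ Irreducible p ∧
      algebraMap D K b • minpoly K ϑ =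
        algebraMap D K d • Polynomial.map (algebraMap D K) p ∧
      Nonempty ((Polynomial D ⧸ Ideal.span {p}) ≃ₐ[D] Algebra.adjoin D {ϑ}) := by
  obtain ⟨b, d, p, hb, hd, hp, hbd⟩ :=
    exists_isPrimitive_smul_eq_smul_map (R := D) (minpoly.ne_zero halg.isIntegral)
  have hpq : Associated (minpoly K ϑ) (p.map (algebraMap D K)) :=
    associated_of_smul_eq_smul ((map_ne_zero_iff _ (IsFractionRing.injective D K)).mpr hb)
      ((map_ne_zero_iff _ (IsFractionRing.injective D K)).mpr hd) hbd
  have hirr : Irreducible p :=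
    (hp.irreducible_iff_irreducible_map_fraction_map (K := K)).mpr
      (hpq.irreducible (minpoly.irreducible halg.isIntegral))
  exact ⟨b, d, p, hp, hirr, hbd, ⟨quotientSpanEquivAdjoin (hp.ker_aeval_eq_span hpq)⟩⟩
end

section
/- Let E be a commutative ring and let J be an ideal of T = E[y₁,…,y_m,x₁,…,x_n], viewed also as Q = (E[y₁,…,y_m])[x₁,…,x_n]. Let ≺ be an elimination order with the x variables larger than the y variables (lexicographically refined as in: x^α y^β ≺ x^{α'} y^{β'} iff x^α ≺ x^{α'} or (x^α = x^{α'} and y^β ≺ y^{β'})). If G = {g₁,…,g_t} is a Gröbner basis of J in T with coefficients in E (with respect to ≺), then G is a Gröbner basis of J in Q with coefficients in E[y₁,…,y_m] (with respect to ≺ restricted to x-monomials). -/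
/-!
Write `φ : E[x, y] ≃ E[y][x]`. Since the order compares x-exponents first, the leading term of
`φ f` over `E[y]` is `x^α c`, where `α` is the x-part of the leading exponent of `f` and
`c ∈ E[y]` collects the coefficients of `f` at exponents with x-part `α`. Induct on the leading
exponent of `f ∈ J`: as `LT(f)` lies in the ideal spanned by the `LT(gᵢ)`, there are `cᵢ ∈ E`
such that `f' = f - ∑ cᵢ x^(deg f - deg gᵢ) gᵢ ∈ J` has smaller leading exponent. The part of
`φ (cᵢ x^(deg f - deg gᵢ) gᵢ)` at `x^α` is a multiple of `LT_Q(φ gᵢ)`, and that of `φ f'` is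
zero or `LT_Q(φ f')`, which is handled by induction.
-/

open MvPolynomial
open Finsupp (sumFinsuppAddEquivProdFinsupp)
open scoped MonomialOrder

section sumAlgEquiv

variable {R S₁ S₂ : Type*} [CommSemiring R]

theorem MvPolynomial.sumAlgEquiv_monomial (d : S₁ ⊕ S₂ →₀ ℕ) (c : R) :
    sumAlgEquiv R S₁ S₂ (monomial d c) =
      monomial (sumFinsuppAddEquivProdFinsupp d).1
        (monomial (sumFinsuppAddEquivProdFinsupp d).2 c) := by
  simp [sumAlgEquiv, monomial]

theorem MvPolynomial.coeff_coeff_sumAlgEquiv (f : MvPolynomial (S₁ ⊕ S₂) R)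
    (α : S₁ →₀ ℕ) (β : S₂ →₀ ℕ) :
    coeff β (coeff α (sumAlgEquiv R S₁ S₂ f)) =
      coeff (sumFinsuppAddEquivProdFinsupp.symm (α, β)) f := by
  classical
  induction f using MvPolynomial.induction_on' with
  | monomial d c =>
    obtain ⟨⟨α', β'⟩, rfl⟩ := sumFinsuppAddEquivProdFinsupp.symm.surjective d
    simp only [sumAlgEquiv_monomial, AddEquiv.apply_symm_apply, coeff_monomial,
      EquivLike.apply_eq_iff_eq, Prod.mk.injEq, ite_and]
    split_ifs <;> simp_all [coeff_monomial]
  | add p q hp hq => simp only [map_add, coeff_add, hp, hq]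

theorem MvPolynomial.coeff_sumAlgEquiv_ne_zero_iff {f : MvPolynomial (S₁ ⊕ S₂) R}
    {α : S₁ →₀ ℕ} :
    coeff α (sumAlgEquiv R S₁ S₂ f) ≠ 0 ↔
      ∃ γ ∈ f.support, (sumFinsuppAddEquivProdFinsupp γ).1 = α := by
  constructor
  · intro h
    obtain ⟨β, hβ⟩ := ne_zero_iff.mp h
    rw [coeff_coeff_sumAlgEquiv] at hβ
    exact ⟨_, mem_support_iff.mpr hβ, by simp⟩
  · rintro ⟨γ, hγ, rfl⟩
    refine ne_zero_iff.mpr ⟨(sumFinsuppAddEquivProdFinsupp γ).2, ?_⟩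
    rwa [coeff_coeff_sumAlgEquiv, Prod.mk.eta, AddEquiv.symm_apply_apply, ← mem_support_iff]

end sumAlgEquiv

theorem MvPolynomial.monomial_coeff_monomial_mul {S A : Type*} [CommSemiring A]
    (a b : S →₀ ℕ) (c : A) (h : MvPolynomial S A) :
    monomial (a + b) (coeff (a + b) (monomial a c * h)) =
      monomial a c * monomial b (coeff b h) := by
  rw [coeff_monomial_mul', if_pos le_self_add, add_tsub_cancel_left, monomial_mul]

namespace MonomialOrder

variable {σ R ι : Type*} [CommRing R] [Fintype ι] (m : MonomialOrder σ)

theorem exists_leadingCoeff_eq_sum {f : MvPolynomial σ R} {G : ι → MvPolynomial σ R}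
    (hf : m.leadingTerm f ∈ Ideal.span (Set.range fun i => m.leadingTerm (G i))) :
    ∃ c : ι → R, (∀ i, c i ≠ 0 → m.degree (G i) ≤ m.degree f) ∧
      m.leadingCoeff f = ∑ i, c i * m.leadingCoeff (G i) := by
  classical
  obtain ⟨q, hq⟩ := Ideal.mem_span_range_iff_exists_fun.mp hf
  refine ⟨fun i => if m.degree (G i) ≤ m.degree f
    then coeff (m.degree f - m.degree (G i)) (q i) else 0, fun i hi => ?_, ?_⟩
  · by_contra hle
    exact hi (if_neg hle)
  · calc m.leadingCoeff f = coeff (m.degree f) (m.leadingTerm f) := by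
          rw [leadingTerm, coeff_monomial, if_pos rfl]
      _ = ∑ i, coeff (m.degree f) (q i * m.leadingTerm (G i)) := by rw [← hq, coeff_sum]
      _ = _ := Finset.sum_congr rfl fun i _ => by
          rw [leadingTerm, coeff_mul_monomial']
          by_cases hi : m.degree (G i) ≤ m.degree f <;> simp [hi]

theorem degree_sub_sum_monomial_mul_lt {f : MvPolynomial σ R} {G : ι → MvPolynomial σ R}
    {c : ι → R} (hc : ∀ i, c i ≠ 0 → m.degree (G i) ≤ m.degree f)
    (hlc : m.leadingCoeff f = ∑ i, c i * m.leadingCoeff (G i))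
    (hne : f - ∑ i, monomial (m.degree f - m.degree (G i)) (c i) * G i ≠ 0) :
    m.degree (f - ∑ i, monomial (m.degree f - m.degree (G i)) (c i) * G i) ≺[m] m.degree f := by
  set d := m.degree f
  set p := ∑ i, monomial (d - m.degree (G i)) (c i) * G i with hp
  have hterm (i : ι) : m.degree (monomial (d - m.degree (G i)) (c i) * G i) ≼[m] d ∧
      coeff d (monomial (d - m.degree (G i)) (c i) * G i) = c i * m.leadingCoeff (G i) := by
    rcases eq_or_ne (c i) 0 with hci | hci
    · simp [hci]
    have hle := hc i hci
    refine ⟨degree_mul_le.trans ?_, ?_⟩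
    · rw [map_add]
      calc m.toSyn (m.degree (monomial (d - m.degree (G i)) (c i))) + m.toSyn (m.degree (G i))
          ≤ m.toSyn (d - m.degree (G i)) + m.toSyn (m.degree (G i)) :=
            add_le_add_left (degree_monomial_le _) _
        _ = m.toSyn d := by rw [← map_add, tsub_add_cancel_of_le hle]
    · rw [coeff_monomial_mul', if_pos tsub_le_self, tsub_tsub_cancel_of_le hle, leadingCoeff]
  have hle : m.degree (f - p) ≼[m] d :=
    degree_sub_le.trans <| sup_le le_rfl <|
      degree_sum_le.trans <| Finset.sup_le fun i _ => (hterm i).1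
  have hcoeff : coeff d (f - p) = 0 := by
    rw [coeff_sub, hp, coeff_sum, Finset.sum_congr rfl fun i _ => (hterm i).2, ← hlc,
      leadingCoeff, sub_self]
  exact hle.lt_of_ne fun heq => hne (m.coeff_degree_eq_zero_iff.mp (by rwa [m.toSyn.injective heq]))

end MonomialOrder

section EliminationOrder

variable {σ τ : Type*}

def IsEliminationOrder (mo : MonomialOrder (σ ⊕ τ)) (mx : MonomialOrder σ) : Prop :=
  ∀ a b : σ ⊕ τ →₀ ℕ, a ≼[mo] b →
    (sumFinsuppAddEquivProdFinsupp a).1 ≼[mx] (sumFinsuppAddEquivProdFinsupp b).1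

variable {mo : MonomialOrder (σ ⊕ τ)} {mx : MonomialOrder σ}

theorem IsEliminationOrder.of_lt
    (h : ∀ a b : σ ⊕ τ →₀ ℕ, a ≺[mo] b →
      (sumFinsuppAddEquivProdFinsupp a).1 ≺[mx] (sumFinsuppAddEquivProdFinsupp b).1 ∨
        (sumFinsuppAddEquivProdFinsupp a).1 = (sumFinsuppAddEquivProdFinsupp b).1) :
    IsEliminationOrder mo mx := by
  intro a b hab
  rcases hab.lt_or_eq with hlt | heq
  · rcases h a b hlt with hx | hx
    · exact hx.le
    · rw [hx]
  · rw [mo.toSyn.injective heq]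

namespace IsEliminationOrder

section CommSemiring

variable {R : Type*} [CommSemiring R]

theorem coeff_sumAlgEquiv_eq_zero_of_lt (hmo : IsEliminationOrder mo mx)
    {f : MvPolynomial (σ ⊕ τ) R} {α : σ →₀ ℕ}
    (hα : (sumFinsuppAddEquivProdFinsupp (mo.degree f)).1 ≺[mx] α) :
    coeff α (sumAlgEquiv R σ τ f) = 0 := by
  by_contra hne
  obtain ⟨γ, hγ, rfl⟩ := coeff_sumAlgEquiv_ne_zero_iff.mp hne
  exact (hmo _ _ (mo.le_degree hγ)).not_gt hα

theorem degree_sumAlgEquiv (hmo : IsEliminationOrder mo mx)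
    {f : MvPolynomial (σ ⊕ τ) R} (hf : f ≠ 0) :
    mx.degree (sumAlgEquiv R σ τ f) = (sumFinsuppAddEquivProdFinsupp (mo.degree f)).1 := by
  apply mx.toSyn.injective
  apply le_antisymm
  · refine mx.degree_le_iff.mpr fun α hα => ?_
    obtain ⟨γ, hγ, rfl⟩ := coeff_sumAlgEquiv_ne_zero_iff.mp (mem_support_iff.mp hα)
    exact hmo _ _ (mo.le_degree hγ)
  · exact mx.le_degree (mem_support_iff.mpr
      (coeff_sumAlgEquiv_ne_zero_iff.mpr ⟨_, mo.degree_mem_support hf, rfl⟩))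

theorem leadingTerm_sumAlgEquiv (hmo : IsEliminationOrder mo mx)
    (f : MvPolynomial (σ ⊕ τ) R) :
    mx.leadingTerm (sumAlgEquiv R σ τ f) =
      monomial (sumFinsuppAddEquivProdFinsupp (mo.degree f)).1
        (coeff (sumFinsuppAddEquivProdFinsupp (mo.degree f)).1 (sumAlgEquiv R σ τ f)) := by
  rcases eq_or_ne f 0 with rfl | hf
  · simp
  · rw [MonomialOrder.leadingTerm, MonomialOrder.leadingCoeff, hmo.degree_sumAlgEquiv hf]

theorem monomial_coeff_sumAlgEquiv_monomial_mul (hmo : IsEliminationOrder mo mx)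
    (δ : σ ⊕ τ →₀ ℕ) (c : R) (g : MvPolynomial (σ ⊕ τ) R) :
    monomial (sumFinsuppAddEquivProdFinsupp (δ + mo.degree g)).1
        (coeff (sumFinsuppAddEquivProdFinsupp (δ + mo.degree g)).1
          (sumAlgEquiv R σ τ (monomial δ c * g))) =
      monomial (sumFinsuppAddEquivProdFinsupp δ).1
          (monomial (sumFinsuppAddEquivProdFinsupp δ).2 c) *
        mx.leadingTerm (sumAlgEquiv R σ τ g) := by
  rw [map_mul, sumAlgEquiv_monomial, map_add, Prod.fst_add, monomial_coeff_monomial_mul,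
    ← hmo.leadingTerm_sumAlgEquiv]

end CommSemiring

variable {R ι : Type*} [CommRing R] [Fintype ι] {J : Ideal (MvPolynomial (σ ⊕ τ) R)}
  {G : ι → MvPolynomial (σ ⊕ τ) R}

theorem leadingTerm_sumAlgEquiv_mem_span (hmo : IsEliminationOrder mo mx)
    (hGJ : ∀ i, G i ∈ J)
    (hGB : ∀ f ∈ J, mo.leadingTerm f ∈ Ideal.span (Set.range fun i => mo.leadingTerm (G i)))
    {f : MvPolynomial (σ ⊕ τ) R} (hf : f ∈ J) :
    mx.leadingTerm (sumAlgEquiv R σ τ f) ∈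
      Ideal.span (Set.range fun i => mx.leadingTerm (sumAlgEquiv R σ τ (G i))) := by
  induction hd : mo.toSyn (mo.degree f) using WellFoundedLT.induction generalizing f with
  | ind s IH =>
  set L := Ideal.span (Set.range fun i => mx.leadingTerm (sumAlgEquiv R σ τ (G i)))
  set d := mo.degree f
  set α := (sumFinsuppAddEquivProdFinsupp d).1
  obtain ⟨c, hc, hlc⟩ := mo.exists_leadingCoeff_eq_sum (hGB f hf)
  set p := ∑ i, monomial (d - mo.degree (G i)) (c i) * G i
  have hremainder : monomial α (coeff α (sumAlgEquiv R σ τ (f - p))) ∈ L := by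
    rcases eq_or_ne (f - p) 0 with h0 | h0
    · simp [h0]
    have hlt := mo.degree_sub_sum_monomial_mul_lt hc hlc h0
    rcases (hmo _ _ hlt.le).lt_or_eq with hx | hx
    · rw [hmo.coeff_sumAlgEquiv_eq_zero_of_lt hx, map_zero]
      exact zero_mem _
    · have hfp : f - p ∈ J := J.sub_mem hf (J.sum_mem fun i _ => J.mul_mem_left _ (hGJ i))
      have hfpα : (sumFinsuppAddEquivProdFinsupp (mo.degree (f - p))).1 = α :=
        mx.toSyn.injective hx
      rw [← hfpα, ← hmo.leadingTerm_sumAlgEquiv]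
      exact IH _ (hd ▸ hlt) hfp rfl
  have hterm (i : ι) : monomial α (coeff α (sumAlgEquiv R σ τ
      (monomial (d - mo.degree (G i)) (c i) * G i))) ∈ L := by
    rcases eq_or_ne (c i) 0 with hci | hci
    · simp [hci]
    have hα : α = (sumFinsuppAddEquivProdFinsupp (d - mo.degree (G i) + mo.degree (G i))).1 := by
      rw [tsub_add_cancel_of_le (hc i hci)]
    rw [hα, hmo.monomial_coeff_sumAlgEquiv_monomial_mul]
    exact Ideal.mul_mem_left _ _ (Ideal.subset_span ⟨i, rfl⟩)
  have hsplit : coeff α (sumAlgEquiv R σ τ f) = coeff α (sumAlgEquiv R σ τ (f - p)) +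
      ∑ i, coeff α (sumAlgEquiv R σ τ (monomial (d - mo.degree (G i)) (c i) * G i)) := by
    rw [map_sub, coeff_sub, map_sum, coeff_sum, sub_add_cancel]
  rw [hmo.leadingTerm_sumAlgEquiv, hsplit, map_add, map_sum]
  exact add_mem hremainder (sum_mem fun i _ => hterm i)

theorem span_leadingTerm_map_sumAlgEquiv (hmo : IsEliminationOrder mo mx)
    (hGJ : ∀ i, G i ∈ J)
    (hGB : Ideal.span (mo.leadingTerm '' {f | f ∈ J ∧ f ≠ 0}) =
      Ideal.span (mo.leadingTerm '' Set.range G)) :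
    Ideal.span (mx.leadingTerm '' {g | g ∈ J.map (sumAlgEquiv R σ τ) ∧ g ≠ 0}) =
      Ideal.span (mx.leadingTerm '' Set.range fun i => sumAlgEquiv R σ τ (G i)) := by
  have hGB' : ∀ f ∈ J,
      mo.leadingTerm f ∈ Ideal.span (Set.range fun i => mo.leadingTerm (G i)) := by
    intro f hf
    rcases eq_or_ne f 0 with rfl | hf0
    · simp
    rw [Set.range_comp' mo.leadingTerm G, ← hGB]
    exact Ideal.subset_span ⟨f, ⟨hf, hf0⟩, rfl⟩
  apply le_antisymm
  · rw [Ideal.span_le]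
    rintro _ ⟨g, ⟨hg, -⟩, rfl⟩
    obtain ⟨f, hf, rfl⟩ := (Ideal.mem_map_iff_of_surjective _ (AlgEquiv.surjective _)).mp hg
    rw [← Set.range_comp]
    exact hmo.leadingTerm_sumAlgEquiv_mem_span hGJ hGB' hf
  · rw [Ideal.span_le]
    rintro _ ⟨_, ⟨i, rfl⟩, rfl⟩
    dsimp only
    rcases eq_or_ne (sumAlgEquiv R σ τ (G i)) 0 with h0 | h0
    · rw [h0, MonomialOrder.leadingTerm_zero]
      exact zero_mem _
    · exact Ideal.subset_span ⟨_, ⟨Ideal.mem_map_of_mem _ (hGJ i), h0⟩, rfl⟩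

end IsEliminationOrder

end EliminationOrder

theorem stmt17_general {E : Type*} [CommRing E] {n m t : ℕ}
    (mo : MonomialOrder (Fin n ⊕ Fin m))
    (mx : MonomialOrder (Fin n)) (my : MonomialOrder (Fin m))
    (horder : ∀ a b : (Fin n ⊕ Fin m) →₀ ℕ,
      mo.toSyn a < mo.toSyn b ↔
        (mx.toSyn (Finsupp.sumFinsuppEquivProdFinsupp a).1 <
            mx.toSyn (Finsupp.sumFinsuppEquivProdFinsupp b).1 ∨
          ((Finsupp.sumFinsuppEquivProdFinsupp a).1 =
              (Finsupp.sumFinsuppEquivProdFinsupp b).1 ∧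
            my.toSyn (Finsupp.sumFinsuppEquivProdFinsupp a).2 <
              my.toSyn (Finsupp.sumFinsuppEquivProdFinsupp b).2)))
    (J : Ideal (MvPolynomial (Fin n ⊕ Fin m) E))
    (G : Fin t → MvPolynomial (Fin n ⊕ Fin m) E)
    (hGJ : ∀ i, G i ∈ J)
    (hGB : Ideal.span (mlt mo '' {f | f ∈ J ∧ f ≠ 0}) =
      Ideal.span (mlt mo '' Set.range G)) :
    Ideal.span (mlt mx ''
        {g | g ∈ Ideal.map (MvPolynomial.sumAlgEquiv E (Fin n) (Fin m)) J ∧ g ≠ 0}) =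
      Ideal.span (mlt mx ''
        Set.range fun i => MvPolynomial.sumAlgEquiv E (Fin n) (Fin m) (G i)) :=
  -- `mlt` is `MonomialOrder.leadingTerm` and `sumFinsuppEquivProdFinsupp` is the map underlying
  -- `sumFinsuppAddEquivProdFinsupp`, both definitionally.
  (IsEliminationOrder.of_lt fun a b hab => ((horder a b).mp hab).imp_right And.left)
    |>.span_leadingTerm_map_sumAlgEquiv hGJ hGB

/-- for an elimination order with x-variables larger than
y-variables, a Gröbner basis of `J` in `T = E[y,x]` (coefficients in `E`) is a
Gröbner basis of `J` in `Q = (E[y])[x]` (coefficients in `E[y]`). -/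
theorem stmt17 {E : Type*} [CommRing E] {n m t : ℕ}
    (mo : MonomialOrder (Fin n ⊕ Fin m))
    (mx : MonomialOrder (Fin n)) (my : MonomialOrder (Fin m))
    (horder : ∀ a b : (Fin n ⊕ Fin m) →₀ ℕ,
      mo.toSyn a < mo.toSyn b ↔
        (mx.toSyn (Finsupp.sumFinsuppEquivProdFinsupp a).1 <
            mx.toSyn (Finsupp.sumFinsuppEquivProdFinsupp b).1 ∨
          ((Finsupp.sumFinsuppEquivProdFinsupp a).1 =
              (Finsupp.sumFinsuppEquivProdFinsupp b).1 ∧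
            my.toSyn (Finsupp.sumFinsuppEquivProdFinsupp a).2 <
              my.toSyn (Finsupp.sumFinsuppEquivProdFinsupp b).2)))
    (J : Ideal (MvPolynomial (Fin n ⊕ Fin m) E))
    (G : Fin t → MvPolynomial (Fin n ⊕ Fin m) E)
    (hGJ : ∀ i, G i ∈ J) (hG0 : ∀ i, G i ≠ 0)
    (hGB : Ideal.span (mlt mo '' {f | f ∈ J ∧ f ≠ 0}) =
      Ideal.span (mlt mo '' Set.range G)) :
    Ideal.span (mlt mx ''
        {g | g ∈ Ideal.map (MvPolynomial.sumAlgEquiv E (Fin n) (Fin m)) J ∧ g ≠ 0}) =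
      Ideal.span (mlt mx ''
        Set.range fun i => MvPolynomial.sumAlgEquiv E (Fin n) (Fin m) (G i)) :=
  stmt17_general mo mx my horder J G hGJ hGB
end

section
/- Let Λ be a commutative ring, I = ⟨ν₁,…,ν_s⟩ an ideal, R = Λ/I, φ : T = Λ[x₁,…,x_n] → A = R[x₁,…,x_n] the coefficientwise reduction, and g₁,…,g_d ∈ T with leading coefficients not in I (so LT(φ(g_j)) = φ(LT(g_j))). Then the map T^{d+s} → A^d sending (h₁,…,h_d,h'₁,…,h'_s) to (φ(h₁),…,φ(h_d)) carries the syzygy module Syz_T(LT(g₁),…,LT(g_d),ν₁,…,ν_s) surjectively onto the syzygy module Syz_A(LT(φ(g₁)),…,LT(φ(g_d))). -/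
lemma mdeg_map {σ R S : Type*} [CommSemiring R] [CommSemiring S] (m : MonomialOrder σ)
    (φ : R →+* S) (f : MvPolynomial σ R) (h : φ (mlc m f) ≠ 0) :
    mdeg m (MvPolynomial.map φ f) = mdeg m f := by
  have hmem : mdeg m f ∈ (MvPolynomial.map φ f).support := by
    rw [MvPolynomial.mem_support_iff, MvPolynomial.coeff_map]
    exact h
  apply m.toSyn.injective
  apply le_antisymm
  · simp only [mdeg, AddEquiv.apply_symm_apply]
    exact Finset.sup_mono (MvPolynomial.support_map_subset φ f)
  · simpa [mdeg] using Finset.le_sup (f := fun e => m.toSyn e) hmem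

lemma mlt_map {σ R S : Type*} [CommSemiring R] [CommSemiring S] (m : MonomialOrder σ)
    (φ : R →+* S) (f : MvPolynomial σ R) (h : φ (mlc m f) ≠ 0) :
    MvPolynomial.map φ (mlt m f) = mlt m (MvPolynomial.map φ f) := by
  rw [mlt, mlt, MvPolynomial.map_monomial, mdeg_map m φ f h]
  congr 1
  rw [mlc, mlc, mdeg_map m φ f h, MvPolynomial.coeff_map]

/-- reduction carries the syzygy module of
`(LT(g₁),…,LT(g_d),ν₁,…,ν_s)` over `T = Λ[x]` onto the syzygy module of
`(LT(φ g₁),…,LT(φ g_d))` over `A = (Λ/I)[x]`, when the leading coefficients of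
the `g_j` lie outside `I`. -/
theorem stmt19 {Λ : Type*} [CommRing Λ] {n d s : ℕ}
    (m : MonomialOrder (Fin n)) (ν : Fin s → Λ) (I : Ideal Λ)
    (hI : I = Ideal.span (Set.range ν))
    (g : Fin d → MvPolynomial (Fin n) Λ)
    (hlc : ∀ i, mlc m (g i) ∉ I) :
    (fun p : (Fin d → MvPolynomial (Fin n) Λ) × (Fin s → MvPolynomial (Fin n) Λ) =>
        fun i => MvPolynomial.map (Ideal.Quotient.mk I) (p.1 i)) ''
      {p : (Fin d → MvPolynomial (Fin n) Λ) × (Fin s → MvPolynomial (Fin n) Λ) |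
        ∑ i, p.1 i * mlt m (g i) + ∑ j, p.2 j * MvPolynomial.C (ν j) = 0} =
    {w : Fin d → MvPolynomial (Fin n) (Λ ⧸ I) |
      ∑ i, w i * mlt m (MvPolynomial.map (Ideal.Quotient.mk I) (g i)) = 0} := by
  have hlc' : ∀ i, (Ideal.Quotient.mk I) (mlc m (g i)) ≠ 0 := fun i hz =>
    hlc i (Ideal.Quotient.eq_zero_iff_mem.mp hz)
  have e1 : ∀ i, MvPolynomial.map (Ideal.Quotient.mk I) (mlt m (g i))
      = mlt m (MvPolynomial.map (Ideal.Quotient.mk I) (g i)) :=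
    fun i => mlt_map m _ (g i) (hlc' i)
  have hC : ∀ j, (MvPolynomial.map (Ideal.Quotient.mk I)) (MvPolynomial.C (ν j))
      = (0 : MvPolynomial (Fin n) (Λ ⧸ I)) := by
    intro j
    rw [MvPolynomial.map_C,
      show (Ideal.Quotient.mk I) (ν j) = 0 from
        Ideal.Quotient.eq_zero_iff_mem.mpr (hI ▸ Ideal.subset_span ⟨j, rfl⟩)]
    exact MvPolynomial.C_0
  ext w
  constructor
  · rintro ⟨p, hp, rfl⟩
    simp only [Set.mem_setOf_eq] at hp ⊢
    have := congrArg (MvPolynomial.map (Ideal.Quotient.mk I)) hp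
    simp only [map_add, map_sum, map_mul, map_zero, e1, hC, mul_zero,
      Finset.sum_const_zero, add_zero] at this
    exact this
  · intro hw
    simp only [Set.mem_setOf_eq] at hw
    have hsurj : Function.Surjective (MvPolynomial.map (σ := Fin n) (Ideal.Quotient.mk I)) :=
      MvPolynomial.map_surjective _ Ideal.Quotient.mk_surjective
    choose h hh using fun i => hsurj (w i)
    set f : MvPolynomial (Fin n) Λ := ∑ i, h i * mlt m (g i) with hf
    have hfmap : MvPolynomial.map (Ideal.Quotient.mk I) f = 0 := by
      rw [hf, map_sum, ← hw]
      exact Finset.sum_congr rfl fun i _ => by rw [map_mul, hh i, e1 i]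
    have hcoeff : ∀ e, f.coeff e ∈ I := by
      intro e
      rw [← Ideal.Quotient.eq_zero_iff_mem, ← MvPolynomial.coeff_map, hfmap,
        MvPolynomial.coeff_zero]
    have hc : ∀ e, ∃ c : Fin s → Λ, ∑ j, c j • ν j = f.coeff e := by
      intro e
      exact (Submodule.mem_span_range_iff_exists_fun Λ).mp (by rw [Ideal.submodule_span_eq, ← hI]; exact hcoeff e)
    choose c hc using hc
    refine ⟨(h, fun j => ∑ e ∈ f.support, MvPolynomial.monomial e (- c e j)), ?_, ?_⟩
    · have key : ∑ j, (∑ e ∈ f.support, MvPolynomial.monomial e (- c e j)) * MvPolynomial.C (ν j)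
          = -f := by
        simp only [Finset.sum_mul]
        rw [Finset.sum_comm]
        conv_rhs => rw [f.as_sum]
        rw [← Finset.sum_neg_distrib]
        apply Finset.sum_congr rfl
        intro e _
        have step : ∀ j, MvPolynomial.monomial e (- c e j) * MvPolynomial.C (ν j)
            = MvPolynomial.monomial e (-(c e j • ν j)) := by
          intro j
          rw [mul_comm, MvPolynomial.C_mul_monomial]
          congr 1
          simp [mul_comm]
        simp only [step]
        rw [← map_sum (MvPolynomial.monomial e), Finset.sum_neg_distrib, hc e]
        simp
      show (∑ i, h i * mlt m (g i)) +
          ∑ j, (∑ e ∈ f.support, MvPolynomial.monomial e (- c e j)) * MvPolynomial.C (ν j) = 0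
      rw [← hf, key, add_neg_cancel]
    · funext i
      exact hh i
end
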